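/- Let X be a finitely generated free ℤ-module of rank m ≥ 1 with a nondegenerate bilinear form (−,=), and let G be the Gram matrix of the form with respect to some ℤ-basis. Let (x_1,…,x_m) and (y_1,…,y_m) be tuples of elements of X such that: (i) (x_i,y_i) ≠ 0 for all i; (ii) (x_i,y_j) = 0 whenever i > j; (iii) (x_i,y_i) divides (x_i,y_j) whenever i < j; (iv) (x_i,y_i) divides (x_{i+1},y_{i+1}) for i ∈ [1,m−1]; (v) ∏_{i∈[1,m]} (x_i,y_i) = ±det G. Then (x_1,…,x_m) and (y_1,…,y_m) are ℤ-bases of X, and the elementary divisors of G are ((x_1,y_1), (x_2,y_2), …, (x_m,y_m)). -/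

import Mathlib

/-- `d` is a tuple of elementary divisors of the square integer matrix `G` (Smith
normal form): each entry divides the next, and `d` is obtained from `G` by unimodular
row and column operations. -/
def IsElementaryDivisorTuple {m : ℕ} (G : Matrix (Fin m) (Fin m) ℤ) (d : Fin m → ℤ) : Prop :=
  (∀ i j : Fin m, i ≤ j → d i ∣ d j) ∧
    ∃ P Q : Matrix (Fin m) (Fin m) ℤ, IsUnit P.det ∧ IsUnit Q.det ∧
      P * G * Q = Matrix.diagonal d

/-!
Writing `A` and `C` for the coordinate matrices of `x` and `y` in the basis, the matrix
`M = ((x_i, y_j))` factors as `Aᵀ G C`. By (ii) it is upper triangular, so its determinant is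
`∏ (x_i, y_i) = ± det G ≠ 0`, which forces `det A` and `det C` to be units: `x` and `y` are bases.
By (iii) row `i` of `M` is divisible by its pivot, so `M = D U` with `D` the diagonal of `M` and
`U` unitriangular; hence `Aᵀ G (C U⁻¹) = D` is a Smith normal form, the divisibility chain
coming from (iv).
-/

open Matrix

theorem LinearMap.of_apply_eq_transpose_toMatrix_mul_mul_toMatrix {R M₁ M₂ ι κ n m : Type*}
    [CommRing R] [AddCommGroup M₁] [Module R M₁] [AddCommGroup M₂] [Module R M₂]
    [Fintype n] [Fintype m] (b₁ : Module.Basis n R M₁) (b₂ : Module.Basis m R M₂)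
    (B : M₁ →ₗ[R] M₂ →ₗ[R] R) (x : ι → M₁) (y : κ → M₂) :
    Matrix.of (fun i j => B (x i) (y j)) =
      (b₁.toMatrix x)ᵀ * Matrix.of (fun k l => B (b₁ k) (b₂ l)) * b₂.toMatrix y := by
  ext i j
  conv_lhs => rw [of_apply, ← b₁.sum_repr (x i), ← b₂.sum_repr (y j)]
  simp only [map_sum, map_smul, LinearMap.sum_apply, LinearMap.smul_apply, Finset.mul_sum,
    smul_eq_mul, mul_apply, Finset.sum_mul, of_apply, transpose_apply, Module.Basis.toMatrix_apply]
  exact Finset.sum_congr rfl fun _ _ => Finset.sum_congr rfl fun _ _ => by ring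

theorem Fin.rel_of_forall_rel_succ {α : Type*} {n : ℕ} (r : α → α → Prop) [Std.Refl r]
    [IsTrans α r] {f : Fin n → α} (h : ∀ i j : Fin n, (i : ℕ) + 1 = j → r (f i) (f j))
    {i j : Fin n} (hij : i ≤ j) : r (f i) (f j) := by
  obtain _ | n := n
  · exact i.elim0
  let g (k : ℕ) : α := f ⟨min k n, by omega⟩
  have hstep (k : ℕ) : r (g k) (g (k + 1)) := by
    rcases lt_or_ge k n with hk | hk
    · exact h _ _ (by simp; omega)
    · simp only [g, min_eq_right hk, min_eq_right (by omega : n ≤ k + 1)]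
      exact refl _
  simpa [g, min_eq_left, Fin.is_le] using
    Nat.rel_of_forall_rel_succ_of_le r hstep (Fin.le_def.mp hij)

theorem isUnit_and_isUnit_of_associated_mul_mul {R : Type*} [CommMonoidWithZero R]
    [IsCancelMulZero R] {a b g : R} (hg : g ≠ 0) (h : Associated (a * g * b) g) :
    IsUnit a ∧ IsUnit b := by
  have hab : Associated (a * b * g) (1 * g) := by rwa [mul_right_comm, one_mul]
  exact IsUnit.mul_iff.mp
    (associated_one_iff_isUnit.mp (hab.of_mul_right (Associated.refl g) hg))

theorem Matrix.exists_det_eq_one_and_diagonal_mul_eq_of_isUpperTriangular {R ι : Type*}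
    [CommRing R] [LinearOrder ι] [Fintype ι] {M : Matrix ι ι R} (hM : M.IsUpperTriangular)
    (hdvd : ∀ i j, i < j → M i i ∣ M i j) :
    ∃ U : Matrix ι ι R, U.det = 1 ∧ diagonal (fun i => M i i) * U = M := by
  choose c hc using hdvd
  let U : Matrix ι ι R := of fun i j => if h : i < j then c i j h else if i = j then 1 else 0
  have hU : U.IsUpperTriangular := fun i j (hji : j < i) => by
    simp [U, not_lt_of_gt hji, hji.ne']
  refine ⟨U, ?_, ?_⟩
  · rw [det_of_isUpperTriangular hU]
    exact Finset.prod_eq_one fun i _ => by simp [U]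
  · ext i j
    rw [diagonal_mul]
    rcases lt_trichotomy i j with hij | rfl | hij
    · simp [U, hij, hc]
    · simp [U]
    · simp [U, not_lt_of_gt hij, hij.ne', hM hij]

theorem isElementaryDivisorTuple_of_mul_mul_eq_isUpperTriangular {m : ℕ}
    {G M P Q : Matrix (Fin m) (Fin m) ℤ} (hP : IsUnit P.det) (hQ : IsUnit Q.det)
    (hPGQ : P * G * Q = M) (hM : M.IsUpperTriangular) (hdvd : ∀ i j, i < j → M i i ∣ M i j)
    (hchain : ∀ i j : Fin m, i ≤ j → M i i ∣ M j j) :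
    IsElementaryDivisorTuple G (fun i => M i i) := by
  obtain ⟨U, hUdet, hDU⟩ := exists_det_eq_one_and_diagonal_mul_eq_of_isUpperTriangular hM hdvd
  have hU : IsUnit U.det := hUdet ▸ isUnit_one
  refine ⟨hchain, P, Q * U⁻¹, hP, ?_, ?_⟩
  · rw [det_mul]
    exact hQ.mul (isUnit_nonsing_inv_det U hU)
  · conv_lhs => rw [← Matrix.mul_assoc, hPGQ, ← hDU]
    rw [Matrix.mul_assoc, mul_nonsing_inv U hU, Matrix.mul_one]

theorem bases_of_triangular_form_general (m : ℕ)
    (X : Type) [AddCommGroup X] [Module ℤ X]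
    (B : X →ₗ[ℤ] X →ₗ[ℤ] ℤ)
    (bas : Module.Basis (Fin m) ℤ X)
    (hG : (Matrix.of fun i j => B (bas i) (bas j)).det ≠ 0)
    (x y : Fin m → X)
    (h2 : ∀ i j : Fin m, j < i → B (x i) (y j) = 0)
    (h3 : ∀ i j : Fin m, i < j → B (x i) (y i) ∣ B (x i) (y j))
    (h4 : ∀ i j : Fin m, (i : ℕ) + 1 = (j : ℕ) → B (x i) (y i) ∣ B (x j) (y j))
    (h5 : (∏ i : Fin m, B (x i) (y i)) = (Matrix.of fun i j => B (bas i) (bas j)).det ∨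
          (∏ i : Fin m, B (x i) (y i)) = -(Matrix.of fun i j => B (bas i) (bas j)).det) :
    (LinearIndependent ℤ x ∧ Submodule.span ℤ (Set.range x) = ⊤) ∧
    (LinearIndependent ℤ y ∧ Submodule.span ℤ (Set.range y) = ⊤) ∧
    IsElementaryDivisorTuple (Matrix.of fun i j => B (bas i) (bas j))
      (fun i => B (x i) (y i)) := by
  set G : Matrix (Fin m) (Fin m) ℤ := Matrix.of fun i j => B (bas i) (bas j)
  set M : Matrix (Fin m) (Fin m) ℤ := Matrix.of fun i j => B (x i) (y j)
  have hfact : M = (bas.toMatrix x)ᵀ * G * bas.toMatrix y :=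
    LinearMap.of_apply_eq_transpose_toMatrix_mul_mul_toMatrix bas bas B x y
  have hM : M.IsUpperTriangular := h2
  have hdet : Associated ((bas.toMatrix x).det * G.det * (bas.toMatrix y).det) G.det := by
    rw [← det_transpose, ← det_mul, ← det_mul, ← hfact, det_of_isUpperTriangular hM]
    exact Int.associated_iff.mpr h5
  obtain ⟨hx, hy⟩ := isUnit_and_isUnit_of_associated_mul_mul hG hdet
  refine ⟨(bas.is_basis_iff_det).mpr hx, (bas.is_basis_iff_det).mpr hy, ?_⟩
  exact isElementaryDivisorTuple_of_mul_mul_eq_isUpperTriangular (by rwa [det_transpose]) hy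
    hfact.symm hM h3 fun _ _ => Fin.rel_of_forall_rel_succ (· ∣ ·) h4

/-- **A linear algebra lemma.** Let `X` be free of rank `m ≥ 1` over `ℤ` with a
nondegenerate bilinear form whose Gram matrix w.r.t. some basis is `G`. If tuples
`(x_i)`, `(y_i)` satisfy (i) `(x_i,y_i) ≠ 0`; (ii) `(x_i,y_j) = 0` for `i > j`;
(iii) `(x_i,y_i) ∣ (x_i,y_j)` for `i < j`; (iv) `(x_i,y_i) ∣ (x_{i+1},y_{i+1})`;
(v) `∏ (x_i,y_i) = ± det G`; then both tuples are `ℤ`-bases of `X` and the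
elementary divisors of `G` are given by the tuple `((x_1,y_1),…,(x_m,y_m))`. -/
theorem bases_of_triangular_form (m : ℕ) (hm : 1 ≤ m)
    (X : Type) [AddCommGroup X] [Module ℤ X]
    (B : X →ₗ[ℤ] X →ₗ[ℤ] ℤ)
    (bas : Module.Basis (Fin m) ℤ X)
    (hG : (Matrix.of fun i j => B (bas i) (bas j)).det ≠ 0)
    (x y : Fin m → X)
    (h1 : ∀ i : Fin m, B (x i) (y i) ≠ 0)
    (h2 : ∀ i j : Fin m, j < i → B (x i) (y j) = 0)
    (h3 : ∀ i j : Fin m, i < j → B (x i) (y i) ∣ B (x i) (y j))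
    (h4 : ∀ i j : Fin m, (i : ℕ) + 1 = (j : ℕ) → B (x i) (y i) ∣ B (x j) (y j))
    (h5 : (∏ i : Fin m, B (x i) (y i)) = (Matrix.of fun i j => B (bas i) (bas j)).det ∨
          (∏ i : Fin m, B (x i) (y i)) = -(Matrix.of fun i j => B (bas i) (bas j)).det) :
    (LinearIndependent ℤ x ∧ Submodule.span ℤ (Set.range x) = ⊤) ∧
    (LinearIndependent ℤ y ∧ Submodule.span ℤ (Set.range y) = ⊤) ∧
    IsElementaryDivisorTuple (Matrix.of fun i j => B (bas i) (bas j))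
      (fun i => B (x i) (y i)) :=
  bases_of_triangular_form_general m X B bas hG x y h2 h3 h4 h5
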